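/- arXiv:2509.26197 — 2 statements merged into one kernel-verified Lean document; each statement's English description precedes it below -/
import Mathlib

section
/- The category of finite meet-semilattices with top element is self-dual: there is an equivalence MSL_f^op ≃ MSL_f sending a finite meet-semilattice M to the semilattice of its filters (with semilattice structure defined pointwise via filters-as-maps M → 2). -/
open CategoryTheory Opposite

/-- The category of finite meet-semilattices with a top element (and top- and
meet-preserving maps). -/
def FinSemilatInf := ObjectProperty.FullSubcategory (fun X : SemilatInfCat => Finite X)

instance : Category FinSemilatInf := ObjectProperty.FullSubcategory.category _

/-- A filter on a meet-semilattice with top: a nonempty, upward-closed subset that is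
closed under binary meets. -/
def IsSemilatticeFilter {M : Type*} [SemilatticeInf M] [OrderTop M] (F : Set M) : Prop :=
  F.Nonempty ∧ (∀ x ∈ F, ∀ y, x ≤ y → y ∈ F) ∧ ∀ x ∈ F, ∀ y ∈ F, x ⊓ y ∈ F

/-!
In a finite meet-semilattice every filter `F` is principal: a minimal element `m` of `F` lies
below every `x ∈ F`, because `m ⊓ x ∈ F`. Hence the evaluation map `m ↦ {F | m ∈ F}` from `M` to
the filters on the filters of `M` is injective (test against `↑m`) and surjective (a filter of
filters is generated by some `↑m`), i.e. an isomorphism, and it is natural in `M`. So the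
contravariant filter functor is inverse to itself, which makes it an equivalence.
-/

universe u v w

section

variable {M N : Type*} [SemilatticeInf M] [OrderTop M] [SemilatticeInf N] [OrderTop N]

namespace IsSemilatticeFilter

variable {F G : Set M}

theorem mem_of_le (hF : IsSemilatticeFilter F) {x y : M} (hx : x ∈ F) (hxy : x ≤ y) : y ∈ F :=
  hF.2.1 x hx y hxy

theorem inf_mem (hF : IsSemilatticeFilter F) {x y : M} (hx : x ∈ F) (hy : y ∈ F) : x ⊓ y ∈ F :=
  hF.2.2 x hx y hy

theorem top_mem (hF : IsSemilatticeFilter F) : ⊤ ∈ F :=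
  let ⟨_, hx⟩ := hF.1
  hF.mem_of_le hx le_top

theorem inf_mem_iff (hF : IsSemilatticeFilter F) {x y : M} : x ⊓ y ∈ F ↔ x ∈ F ∧ y ∈ F :=
  ⟨fun h => ⟨hF.mem_of_le h inf_le_left, hF.mem_of_le h inf_le_right⟩,
    fun h => hF.inf_mem h.1 h.2⟩

theorem Ici_subset_iff (hF : IsSemilatticeFilter F) {x : M} : Set.Ici x ⊆ F ↔ x ∈ F :=
  ⟨fun h => h le_rfl, fun hx _ hy => hF.mem_of_le hx hy⟩

theorem inter (hF : IsSemilatticeFilter F) (hG : IsSemilatticeFilter G) :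
    IsSemilatticeFilter (F ∩ G) :=
  ⟨⟨⊤, hF.top_mem, hG.top_mem⟩, fun _ hx _ hxy => ⟨hF.mem_of_le hx.1 hxy, hG.mem_of_le hx.2 hxy⟩,
    fun _ hx _ hy => ⟨hF.inf_mem hx.1 hy.1, hG.inf_mem hx.2 hy.2⟩⟩

theorem preimage {F : Set N} (hF : IsSemilatticeFilter F) (f : InfTopHom M N) :
    IsSemilatticeFilter (f ⁻¹' F) :=
  ⟨⟨⊤, by simpa using hF.top_mem⟩, fun _ hx _ hxy => hF.mem_of_le hx (OrderHomClass.mono f hxy),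
    fun _ hx _ hy => by simpa [Set.mem_preimage, map_inf] using hF.inf_mem hx hy⟩

theorem exists_eq_Ici [Finite M] (hF : IsSemilatticeFilter F) : ∃ m, F = Set.Ici m := by
  obtain ⟨m, hm⟩ := exists_minimal_of_wellFoundedLT (· ∈ F) hF.1
  refine ⟨m, Set.Subset.antisymm (fun x hx => ?_) (hF.Ici_subset_iff.2 hm.prop)⟩
  exact (hm.le_of_le (hF.inf_mem hm.prop hx) inf_le_left).trans inf_le_right

end IsSemilatticeFilter

theorem isSemilatticeFilter_univ : IsSemilatticeFilter (Set.univ : Set M) :=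
  ⟨Set.univ_nonempty, fun _ _ _ _ => trivial, fun _ _ _ _ => trivial⟩

theorem isSemilatticeFilter_Ici (m : M) : IsSemilatticeFilter (Set.Ici m) :=
  ⟨⟨m, le_rfl⟩, fun _ hx _ hxy => le_trans hx hxy, fun _ hx _ hy => le_inf hx hy⟩

def SemilatticeFilter (M : Type*) [SemilatticeInf M] [OrderTop M] : Type _ :=
  {F : Set M // IsSemilatticeFilter F}

namespace SemilatticeFilter

instance : SemilatticeInf (SemilatticeFilter M) :=
  Subtype.semilatticeInf fun _ _ => IsSemilatticeFilter.inter

instance : OrderTop (SemilatticeFilter M) :=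
  Subtype.orderTop isSemilatticeFilter_univ

instance [Finite M] : Finite (SemilatticeFilter M) :=
  inferInstanceAs (Finite {F : Set M // IsSemilatticeFilter F})

@[ext]
theorem ext {F G : SemilatticeFilter M} (h : F.1 = G.1) : F = G :=
  Subtype.ext h

theorem le_def {F G : SemilatticeFilter M} : F ≤ G ↔ F.1 ⊆ G.1 :=
  Iff.rfl

def comap (f : InfTopHom M N) : InfTopHom (SemilatticeFilter N) (SemilatticeFilter M) where
  toFun F := ⟨f ⁻¹' F.1, F.2.preimage f⟩
  map_inf' _ _ := rfl
  map_top' := rfl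

@[simp]
theorem coe_comap (f : InfTopHom M N) (F : SemilatticeFilter N) : (comap f F).1 = f ⁻¹' F.1 :=
  rfl

def congr (e : M ≃o N) : SemilatticeFilter M ≃o SemilatticeFilter N where
  toFun := comap (e.symm : InfTopHom N M)
  invFun := comap (e : InfTopHom M N)
  left_inv F := SemilatticeFilter.ext (e.toEquiv.preimage_symm_preimage F.1)
  right_inv F := SemilatticeFilter.ext (e.toEquiv.symm_preimage_preimage F.1)
  map_rel_iff' := e.symm.surjective.preimage_subset_preimage_iff

@[simp]
theorem congr_apply (e : M ≃o N) (F : SemilatticeFilter M) :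
    SemilatticeFilter.congr e F = comap (e.symm : InfTopHom N M) F :=
  rfl

variable (M) in
def eval : InfTopHom M (SemilatticeFilter (SemilatticeFilter M)) where
  toFun m := ⟨{F | m ∈ F.1}, ⟨⊤, trivial⟩, fun _ hF _ hFG => hFG hF, fun _ hF _ hG => ⟨hF, hG⟩⟩
  map_inf' _ _ := SemilatticeFilter.ext <| Set.ext fun F => F.2.inf_mem_iff
  map_top' := SemilatticeFilter.ext <| Set.ext fun F => iff_of_true F.2.top_mem trivial

@[simp]
theorem mem_eval {m : M} {F : SemilatticeFilter M} : F ∈ (eval M m).1 ↔ m ∈ F.1 :=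
  Iff.rfl

theorem eval_le_eval_iff {m n : M} : eval M m ≤ eval M n ↔ m ≤ n :=
  ⟨fun h => @h ⟨Set.Ici m, isSemilatticeFilter_Ici m⟩ le_rfl,
    fun h F (hF : m ∈ F.1) => F.2.mem_of_le hF h⟩

theorem eval_surjective [Finite M] : Function.Surjective (eval M) := by
  intro 𝔉
  obtain ⟨F₀, h𝔉⟩ := 𝔉.2.exists_eq_Ici
  obtain ⟨m, hF₀⟩ := F₀.2.exists_eq_Ici
  refine ⟨m, SemilatticeFilter.ext <| Set.ext fun G => ?_⟩
  change m ∈ G.1 ↔ G ∈ 𝔉.1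
  rw [h𝔉, Set.mem_Ici, le_def, hF₀, G.2.Ici_subset_iff]

variable (M) in
noncomputable def evalOrderIso [Finite M] : M ≃o SemilatticeFilter (SemilatticeFilter M) :=
  OrderIso.ofSurjective (OrderEmbedding.ofMapLEIff (eval M) fun _ _ => eval_le_eval_iff)
    eval_surjective

@[simp]
theorem evalOrderIso_apply [Finite M] (m : M) : evalOrderIso M m = eval M m :=
  rfl

end SemilatticeFilter

noncomputable instance {α : Type*} [Min α] [Small.{w} α] : Min (Shrink.{w} α) :=
  (equivShrink α).symm.min

noncomputable instance {α : Type*} [SemilatticeInf α] [Small.{w} α] :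
    SemilatticeInf (Shrink.{w} α) :=
  (equivShrink α).symm.injective.semilatticeInf _ Iff.rfl Iff.rfl
    fun _ _ => (equivShrink α).symm_apply_apply _

namespace InfTopHom

variable {K : Type*} [SemilatticeInf K] [OrderTop K] [Small.{w} K] [Small.{w} M] [Small.{w} N]

noncomputable def shrink (f : InfTopHom M N) : InfTopHom (Shrink.{w} M) (Shrink.{w} N) :=
  ((orderIsoShrink N : InfTopHom _ _).comp f).comp ((orderIsoShrink M).symm : InfTopHom _ _)

@[simp]
theorem shrink_apply (f : InfTopHom M N) (x : Shrink.{w} M) :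
    f.shrink x = equivShrink N (f ((equivShrink M).symm x)) :=
  rfl

theorem shrink_id : (InfTopHom.id M).shrink = InfTopHom.id (Shrink.{w} M) := by
  ext; simp

theorem shrink_comp (f : InfTopHom K M) (g : InfTopHom M N) :
    (g.comp f).shrink = g.shrink.comp (f.shrink : InfTopHom (Shrink.{w} K) _) := by
  ext; simp

end InfTopHom

end

namespace SemilatticeFilter

open InfTopHom

noncomputable def doubleDualOrderIso (M : Type u) [SemilatticeInf M] [OrderTop M] [Finite M] :
    M ≃o Shrink.{w} (SemilatticeFilter (Shrink.{v} (SemilatticeFilter M))) :=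
  (evalOrderIso M).trans
    ((congr (orderIsoShrink.{v} (SemilatticeFilter M))).trans (orderIsoShrink.{w} _))

theorem doubleDualOrderIso_apply_map {M N : Type u} [SemilatticeInf M] [OrderTop M]
    [SemilatticeInf N] [OrderTop N] [Finite M] [Finite N] (f : InfTopHom M N) (x : M) :
    doubleDualOrderIso.{u, v, w} N (f x) =
      (comap (comap f).shrink.{v}).shrink.{w} (doubleDualOrderIso.{u, v, w} M x) := by
  simp only [doubleDualOrderIso, OrderIso.trans_apply, shrink_apply, orderIsoShrink_apply,
    Equiv.symm_apply_apply]
  congr 1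
  ext G
  simp

end SemilatticeFilter

namespace FinSemilatInf

open SemilatticeFilter

instance (M : FinSemilatInf) : Finite M.obj := M.property

-- The carriers are shrunk so that the functor can land in any universe: in the theorem the
-- target category is `FinSemilatInf.{0}`, whatever the universe of the source.
noncomputable def filterFunctor : FinSemilatInf.{u}ᵒᵖ ⥤ FinSemilatInf.{v} where
  obj M := ⟨.of (Shrink.{v} (SemilatticeFilter M.unop.obj)), inferInstance⟩
  map f := ObjectProperty.homMk (InfTopHom.shrink.{v} (comap f.unop.hom))
  map_id _ := ObjectProperty.hom_ext _ InfTopHom.shrink_id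
  map_comp f g :=
    ObjectProperty.hom_ext _ (InfTopHom.shrink_comp.{v} (comap f.unop.hom) (comap g.unop.hom))

noncomputable def doubleDualIso :
    𝟭 FinSemilatInf.{u} ≅ filterFunctor.{u, v}.rightOp ⋙ filterFunctor.{v, u} :=
  NatIso.ofComponents
    (fun M => ObjectProperty.isoMk _ (SemilatInfCat.Iso.mk (doubleDualOrderIso.{u, v, u} M.obj)))
    (fun f => ObjectProperty.hom_ext _ (InfTopHom.ext (doubleDualOrderIso_apply_map f.hom)))

noncomputable def filterEquivalence : FinSemilatInf.{u}ᵒᵖ ≌ FinSemilatInf.{v} :=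
  CategoryTheory.Equivalence.mk filterFunctor.{u, v} filterFunctor.{v, u}.rightOp
    (NatIso.op doubleDualIso.{u, v}).symm doubleDualIso.{v, u}.symm

end FinSemilatInf

/-- The category of finite meet-semilattices with top is self-dual: there is an equivalence
`FinSemilatInfᵒᵖ ≌ FinSemilatInf` sending a finite meet-semilattice `M` to the semilattice
of its filters (ordered by inclusion). -/
theorem finSemilatInf_self_dual :
    ∃ E : FinSemilatInfᵒᵖ ≌ FinSemilatInf,
      ∀ M : FinSemilatInf,
        Nonempty (((E.functor.obj (op M)).obj : Type) ≃o
          {F : Set M.obj // IsSemilatticeFilter F}) :=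
  ⟨FinSemilatInf.filterEquivalence, fun M => ⟨(orderIsoShrink.{0} (SemilatticeFilter M.obj)).symm⟩⟩
end

section
/- For every set X, finitely additive probability measures on X correspond bijectively and naturally to effect module morphisms [0,1]^X → [0,1]: the map sending f to the measure p with p(A) = f(χ_A) is a bijection EMod([0,1]^X, [0,1]) ≅ EA(2^X, [0,1]). -/
open scoped Classical

open unitInterval

universe u

/-- An effect module morphism `[0,1]^X → [0,1]`: a map preserving the top element, the
partial addition (defined when the pointwise sum is at most `1`), and the `[0,1]`-scalar
action. -/
structure EffectModuleHomPow (X : Type u) where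
  toFun : (X → I) → I
  map_one : toFun 1 = 1
  map_add : ∀ g h : X → I, ∀ hgh : ∀ x, (g x : ℝ) + (h x : ℝ) ≤ 1,
    (toFun (fun x => ⟨(g x : ℝ) + (h x : ℝ),
      ⟨add_nonneg (g x).2.1 (h x).2.1, hgh x⟩⟩) : ℝ) = (toFun g : ℝ) + (toFun h : ℝ)
  map_smul : ∀ (r : I) (g : X → I), toFun (fun x => r * g x) = r * toFun g

/-- A finitely additive probability measure on a set `X`: a `[0,1]`-valued map on subsets
of `X` with `p(X) = 1` that is additive on disjoint subsets. -/
structure FinAddProb (X : Type u) where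
  meas : Set X → I
  meas_univ : meas Set.univ = 1
  meas_union : ∀ A B : Set X, Disjoint A B →
    (meas (A ∪ B) : ℝ) = (meas A : ℝ) + (meas B : ℝ)

open Finset

noncomputable section
namespace EMFAProof
variable {X : Type u}

def chi (A : Set X) : X → I := fun x => if x ∈ A then 1 else 0

lemma chi_coe (A : Set X) (x : X) : ((chi A x : I) : ℝ) = if x ∈ A then 1 else 0 := by
  unfold chi; split <;> simp

def P (p : FinAddProb X) (A : Set X) : ℝ := (p.meas A : ℝ)

lemma P_nonneg (p : FinAddProb X) (A : Set X) : 0 ≤ P p A := (p.meas A).2.1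
lemma P_le_one (p : FinAddProb X) (A : Set X) : P p A ≤ 1 := (p.meas A).2.2
lemma P_univ (p : FinAddProb X) : P p Set.univ = 1 := by
  unfold P; rw [p.meas_univ]; simp
lemma P_union (p : FinAddProb X) {A B : Set X} (h : Disjoint A B) :
    P p (A ∪ B) = P p A + P p B := p.meas_union A B h
lemma P_empty (p : FinAddProb X) : P p ∅ = 0 := by
  have := P_union p (A := (∅ : Set X)) (B := ∅) (by simp)
  simp at this
  linarith [this]
lemma P_mono (p : FinAddProb X) {A B : Set X} (h : A ⊆ B) : P p A ≤ P p B := by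
  have hu : A ∪ (B \ A) = B := Set.union_diff_cancel h
  have h2 := P_union p (A := A) (B := B \ A) disjoint_sdiff_self_right
  rw [hu] at h2
  have := P_nonneg p (B \ A)
  linarith

lemma P_biUnion (p : FinAddProb X) {ι : Type} (A : ι → Set X) (s : Finset ι)
    (hd : ∀ i ∈ s, ∀ j ∈ s, i ≠ j → Disjoint (A i) (A j)) :
    P p (⋃ i ∈ s, A i) = ∑ i ∈ s, P p (A i) := by
  classical
  induction s using Finset.induction_on with
  | empty => simpa using P_empty p
  | @insert a t hni ih =>
    rw [Finset.sum_insert hni]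
    have hset : (⋃ i ∈ insert a t, A i) = A a ∪ ⋃ i ∈ t, A i := by
      simp [Set.biUnion_insert]
    rw [hset, P_union p, ih]
    · intro i hi j hj hij
      exact hd i (Finset.mem_insert_of_mem hi) j (Finset.mem_insert_of_mem hj) hij
    · rw [Set.disjoint_iUnion₂_right]
      intro i hi
      exact hd a (Finset.mem_insert_self a t) i (Finset.mem_insert_of_mem hi)
        (fun h => hni (h ▸ hi))

lemma decomp (p : FinAddProb X) (u v : X → ℕ) (N : ℕ) (hu : ∀ x, u x ≤ N)
    (hv : ∀ x, v x ≤ N) (Q : ℕ → ℕ → Prop) [∀ i j, Decidable (Q i j)] :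
    P p {x | Q (u x) (v x)} =
      ∑ ij ∈ (range (N+1)) ×ˢ (range (N+1)),
        if Q ij.1 ij.2 then P p ({x | u x = ij.1} ∩ {x | v x = ij.2}) else 0 := by
  classical
  set s := ((range (N+1)) ×ˢ (range (N+1))).filter (fun ij => Q ij.1 ij.2) with hs
  have hset : {x | Q (u x) (v x)} = ⋃ ij ∈ s, ({x | u x = ij.1} ∩ {x | v x = ij.2}) := by
    ext x
    simp only [Set.mem_setOf_eq, Set.mem_iUnion, Set.mem_inter_iff, hs, Finset.mem_filter,
      Finset.mem_product, Finset.mem_range]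
    constructor
    · intro h
      exact ⟨(u x, v x), ⟨⟨Nat.lt_succ_of_le (hu x), Nat.lt_succ_of_le (hv x)⟩, h⟩, rfl, rfl⟩
    · rintro ⟨ij, ⟨_, hq⟩, h1, h2⟩
      rw [← h1, ← h2] at hq; exact hq
  rw [hset, P_biUnion p _ s, ← Finset.sum_filter]
  intro i hi j hj hij
  rw [Set.disjoint_left]
  rintro x ⟨hx1, hx2⟩ ⟨hy1, hy2⟩
  exact hij (Prod.ext (hx1 ▸ hy1 ▸ rfl) (hx2 ▸ hy2 ▸ rfl))

lemma card_filter_le (N m : ℕ) : ((Icc 1 N).filter (fun k => k ≤ m)).card = min m N := by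
  have : (Icc 1 N).filter (fun k => k ≤ m) = Icc 1 (min m N) := by
    ext k; simp only [mem_filter, mem_Icc, le_min_iff]; omega
  rw [this, Nat.card_Icc]; omega

lemma Tlem (p : FinAddProb X) (u v : X → ℕ) (N : ℕ) (h : ∀ x, u x + v x ≤ N) :
    ∑ k ∈ Icc 1 N, P p {x | k ≤ u x + v x} =
      ∑ k ∈ Icc 1 N, P p {x | k ≤ u x} + ∑ k ∈ Icc 1 N, P p {x | k ≤ v x} := by
  classical
  have hu : ∀ x, u x ≤ N := fun x => le_trans (Nat.le_add_right _ _) (h x)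
  have hv : ∀ x, v x ≤ N := fun x => le_trans (Nat.le_add_left _ _) (h x)
  set s := (range (N+1)) ×ˢ (range (N+1)) with hs
  set A : ℕ × ℕ → Set X := fun ij => {x | u x = ij.1} ∩ {x | v x = ij.2} with hA
  have layer : ∀ c : ℕ → ℕ → ℕ,
      ∑ k ∈ Icc 1 N, P p {x | k ≤ c (u x) (v x)} =
        ∑ ij ∈ s, ((min (c ij.1 ij.2) N : ℕ) : ℝ) * P p (A ij) := by
    intro c
    have h1 : ∀ k, P p {x | k ≤ c (u x) (v x)} =
        ∑ ij ∈ s, if k ≤ c ij.1 ij.2 then P p (A ij) else 0 := fun k =>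
      decomp p u v N hu hv (fun i j => k ≤ c i j)
    calc ∑ k ∈ Icc 1 N, P p {x | k ≤ c (u x) (v x)}
        = ∑ k ∈ Icc 1 N, ∑ ij ∈ s, if k ≤ c ij.1 ij.2 then P p (A ij) else 0 :=
          Finset.sum_congr rfl (fun k _ => h1 k)
      _ = ∑ ij ∈ s, ∑ k ∈ Icc 1 N, if k ≤ c ij.1 ij.2 then P p (A ij) else 0 :=
          Finset.sum_comm
      _ = ∑ ij ∈ s, ((min (c ij.1 ij.2) N : ℕ) : ℝ) * P p (A ij) := by
          refine Finset.sum_congr rfl (fun ij _ => ?_)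
          rw [← Finset.sum_filter, Finset.sum_const, card_filter_le]
          simp [nsmul_eq_mul]
  have hz : ∀ ij ∈ s, (A ij ≠ ∅) → ij.1 + ij.2 ≤ N := by
    rintro ij _ hne
    rcases Set.nonempty_iff_ne_empty.2 hne with ⟨x, hx1, hx2⟩
    simp only [Set.mem_setOf_eq] at hx1 hx2
    rw [← hx1, ← hx2]; exact h x
  have e1 := layer (fun i j => i + j)
  have e2 := layer (fun i _ => i)
  have e3 := layer (fun _ j => j)
  rw [e1, e2, e3, ← Finset.sum_add_distrib]
  refine Finset.sum_congr rfl (fun ij hij => ?_)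
  by_cases hne : A ij = ∅
  · rw [hne, P_empty]; ring
  · have hij2 := hz ij hij hne
    have hin : ij.1 ∈ range (N+1) ∧ ij.2 ∈ range (N+1) := by
      rw [hs, Finset.mem_product] at hij; exact hij
    have h1 : ij.1 ≤ N := by have := hin.1; rw [Finset.mem_range] at this; omega
    have h2 : ij.2 ≤ N := by have := hin.2; rw [Finset.mem_range] at this; omega
    rw [min_eq_left hij2, min_eq_left h1, min_eq_left h2]
    push_cast; ring

/-! ### the Riemann sums -/

def flr (n : ℕ) (g : X → I) (x : X) : ℕ := ⌊(2^n : ℝ) * (g x : ℝ)⌋₊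

lemma flr_le (n : ℕ) (g : X → I) (x : X) : flr n g x ≤ 2^n := by
  have : (2^n : ℝ) * (g x : ℝ) ≤ ((2^n : ℕ) : ℝ) := by
    push_cast
    nlinarith [(g x).2.2, (g x).2.1, pow_pos (show (0:ℝ) < 2 by norm_num) n]
  calc flr n g x ≤ ⌊((2^n : ℕ) : ℝ)⌋₊ := Nat.floor_le_floor this
    _ = 2^n := Nat.floor_natCast _

def S (p : FinAddProb X) (n : ℕ) (g : X → I) : ℝ :=
  ((2:ℝ)^n)⁻¹ * ∑ k ∈ Icc 1 (2^n), P p {x | k ≤ flr n g x}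

lemma two_pow_pos (n : ℕ) : (0:ℝ) < (2:ℝ)^n := pow_pos (by norm_num) n

lemma S_nonneg (p : FinAddProb X) (n : ℕ) (g : X → I) : 0 ≤ S p n g := by
  apply mul_nonneg (by positivity)
  exact Finset.sum_nonneg (fun k _ => P_nonneg p _)

lemma S_le_one (p : FinAddProb X) (n : ℕ) (g : X → I) : S p n g ≤ 1 := by
  have h1 : ∑ k ∈ Icc 1 (2^n), P p {x | k ≤ flr n g x} ≤ ∑ k ∈ Icc 1 (2^n), (1:ℝ) :=
    Finset.sum_le_sum (fun k _ => P_le_one p _)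
  have h2 : ∑ k ∈ Icc 1 (2^n), (1:ℝ) = (2^n : ℕ) := by
    rw [Finset.sum_const, Nat.card_Icc]; simp
  rw [S, inv_mul_le_iff₀ (two_pow_pos n), mul_one]
  calc _ ≤ ((2^n : ℕ) : ℝ) := h2 ▸ h1
    _ = (2:ℝ)^n := by push_cast; ring

lemma sum_pair (f : ℕ → ℝ) (M : ℕ) :
    ∑ k ∈ Icc 1 (2*M), f k = ∑ k ∈ Icc 1 M, (f (2*k-1) + f (2*k)) := by
  induction M with
  | zero => simp
  | succ M ih =>
    have e1 : 2*(M+1) = (2*M+1)+1 := by ring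
    rw [e1, Finset.sum_Icc_succ_top (by omega) f, Finset.sum_Icc_succ_top (by omega) f,
      Finset.sum_Icc_succ_top (by omega) (fun k => f (2*k-1) + f (2*k)), ih]
    have e2 : 2*(M+1)-1 = 2*M+1 := by omega
    have e3 : 2*(M+1) = 2*M+1+1 := by omega
    rw [e2, e3]; ring

lemma S_mono_n (p : FinAddProb X) (n : ℕ) (g : X → I) : S p n g ≤ S p (n+1) g := by
  have hsub : ∀ k : ℕ, {x | k ≤ 2 * flr n g x} ⊆ {x | k ≤ flr (n+1) g x} := by
    intro k x hx
    simp only [Set.mem_setOf_eq] at hx ⊢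
    refine le_trans hx ?_
    have h1 : ((2 * flr n g x : ℕ) : ℝ) ≤ (2^(n+1) : ℝ) * (g x : ℝ) := by
      push_cast
      have := Nat.floor_le (mul_nonneg (le_of_lt (two_pow_pos n)) (g x).2.1)
      unfold flr
      rw [pow_succ]
      nlinarith [this]
    exact Nat.le_floor h1
  have key : ∑ k ∈ Icc 1 (2^(n+1)), P p {x | k ≤ 2 * flr n g x}
      = 2 * ∑ k ∈ Icc 1 (2^n), P p {x | k ≤ flr n g x} := by
    have e : (2:ℕ)^(n+1) = 2 * 2^n := by ring
    rw [e, sum_pair, Finset.mul_sum]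
    refine Finset.sum_congr rfl (fun k hk => ?_)
    have hk1 : 1 ≤ k := by rw [Finset.mem_Icc] at hk; exact hk.1
    have s1 : {x | 2*k-1 ≤ 2 * flr n g x} = {x | k ≤ flr n g x} := by
      ext x; simp only [Set.mem_setOf_eq]; omega
    have s2 : {x | 2*k ≤ 2 * flr n g x} = {x | k ≤ flr n g x} := by
      ext x; simp only [Set.mem_setOf_eq]; omega
    rw [s1, s2]; ring
  have hle : ∑ k ∈ Icc 1 (2^(n+1)), P p {x | k ≤ 2 * flr n g x}
      ≤ ∑ k ∈ Icc 1 (2^(n+1)), P p {x | k ≤ flr (n+1) g x} :=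
    Finset.sum_le_sum (fun k _ => P_mono p (hsub k))
  rw [key] at hle
  unfold S
  rw [pow_succ, mul_inv, mul_comm ((2:ℝ)^n)⁻¹ (2:ℝ)⁻¹, mul_assoc]
  rw [le_inv_mul_iff₀ (by norm_num : (0:ℝ) < 2)]
  rw [← mul_assoc, mul_comm (2:ℝ) ((2:ℝ)^n)⁻¹, mul_assoc]
  exact mul_le_mul_of_nonneg_left (by linarith) (by positivity)

def F (p : FinAddProb X) (g : X → I) : ℝ := ⨆ n, S p n g

lemma S_bddAbove (p : FinAddProb X) (g : X → I) : BddAbove (Set.range (fun n => S p n g)) :=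
  ⟨1, by rintro y ⟨n, rfl⟩; exact S_le_one p n g⟩

lemma S_monotone (p : FinAddProb X) (g : X → I) : Monotone (fun n => S p n g) :=
  monotone_nat_of_le_succ (fun n => S_mono_n p n g)

lemma tendsto_S (p : FinAddProb X) (g : X → I) :
    Filter.Tendsto (fun n => S p n g) Filter.atTop (nhds (F p g)) :=
  tendsto_atTop_ciSup (S_monotone p g) (S_bddAbove p g)

lemma F_nonneg (p : FinAddProb X) (g : X → I) : 0 ≤ F p g :=
  le_trans (S_nonneg p 0 g) (le_ciSup (S_bddAbove p g) 0)

lemma F_le_one (p : FinAddProb X) (g : X → I) : F p g ≤ 1 :=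
  ciSup_le (fun n => S_le_one p n g)

lemma F_mem (p : FinAddProb X) (g : X → I) : F p g ∈ I := ⟨F_nonneg p g, F_le_one p g⟩

lemma S_chi (p : FinAddProb X) (n : ℕ) (A : Set X) : S p n (chi A) = P p A := by
  unfold S
  have : ∀ k ∈ Icc 1 (2^n), P p {x | k ≤ flr n (chi A) x} = P p A := by
    intro k hk
    rw [Finset.mem_Icc] at hk
    congr 1
    ext x
    simp only [Set.mem_setOf_eq]
    unfold flr
    rw [chi_coe]
    by_cases hx : x ∈ A
    · simp only [hx, if_true, mul_one, iff_true]
      have : ((2:ℝ)^n) = ((2^n : ℕ) : ℝ) := by push_cast; ring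
      rw [this, Nat.floor_natCast]
      exact hk.2
    · simp only [hx, if_false, mul_zero, Nat.floor_zero, iff_false]
      omega
  rw [Finset.sum_congr rfl this, Finset.sum_const, Nat.card_Icc]
  simp only [nsmul_eq_mul]
  have : ((2^n + 1 - 1 : ℕ) : ℝ) = (2:ℝ)^n := by push_cast; ring
  rw [this, ← mul_assoc, inv_mul_cancel₀ (ne_of_gt (two_pow_pos n)), one_mul]

lemma F_chi (p : FinAddProb X) (A : Set X) : F p (chi A) = P p A := by
  unfold F
  rw [show (fun n => S p n (chi A)) = (fun _ => P p A) from funext (S_chi p · A)]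
  exact ciSup_const

lemma chi_univ : chi (Set.univ : Set X) = 1 := by
  funext x; unfold chi; simp

lemma F_one (p : FinAddProb X) : F p 1 = 1 := by
  rw [← chi_univ, F_chi, P_univ]


/-! ### additivity -/

lemma ext_sum (p : FinAddProb X) (n : ℕ) (t : X → ℕ) (ht : ∀ x, t x ≤ 2^n) :
    ∑ k ∈ Icc 1 (2^(n+1)), P p {x | k ≤ t x} = ∑ k ∈ Icc 1 (2^n), P p {x | k ≤ t x} := by
  symm
  apply Finset.sum_subset
  · exact Finset.Icc_subset_Icc_right (by
      have : (2:ℕ)^n ≤ 2^(n+1) := Nat.pow_le_pow_right (by norm_num) (by omega)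
      exact this)
  · intro k hk hk2
    rw [Finset.mem_Icc] at hk hk2
    have hk3 : 2^n < k := by omega
    have : {x | k ≤ t x} = (∅ : Set X) := by
      ext x; simp only [Set.mem_setOf_eq, Set.mem_empty_iff_false, iff_false]
      have := ht x; omega
    rw [this, P_empty]

lemma sum_one_layer (p : FinAddProb X) (N : ℕ) (hN : 1 ≤ N) :
    ∑ k ∈ Icc 1 N, P p {x : X | k ≤ 1} = 1 := by
  rw [Finset.sum_eq_single 1]
  · have : {x : X | 1 ≤ 1} = Set.univ := by ext x; simp
    rw [this, P_univ]
  · intro k hk hk1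
    rw [Finset.mem_Icc] at hk
    have : {x : X | k ≤ 1} = (∅ : Set X) := by
      ext x; simp only [Set.mem_setOf_eq, Set.mem_empty_iff_false, iff_false]; omega
    rw [this, P_empty]
  · intro h; exfalso; apply h; rw [Finset.mem_Icc]; omega

section add
variable (p : FinAddProb X) (g h : X → I) (hgh : ∀ x, (g x : ℝ) + (h x : ℝ) ≤ 1)

def padd : X → I := fun x => ⟨(g x : ℝ) + (h x : ℝ), ⟨add_nonneg (g x).2.1 (h x).2.1, hgh x⟩⟩

lemma uv_le (n : ℕ) (x : X) : flr n g x + flr n (padd g h hgh) x ≤ 2^n + 2^n := by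
  have := flr_le n g x; have := flr_le n (padd g h hgh) x; omega

lemma flr_add_bounds (n : ℕ) (x : X) :
    flr n g x + flr n h x ≤ flr n (padd g h hgh) x ∧
    flr n (padd g h hgh) x ≤ flr n g x + flr n h x + 1 ∧
    flr n g x + flr n h x ≤ 2^n := by
  have hg0 : (0:ℝ) ≤ (2^n : ℝ) * (g x : ℝ) := mul_nonneg (le_of_lt (two_pow_pos n)) (g x).2.1
  have hh0 : (0:ℝ) ≤ (2^n : ℝ) * (h x : ℝ) := mul_nonneg (le_of_lt (two_pow_pos n)) (h x).2.1
  have hfg := Nat.floor_le hg0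
  have hfh := Nat.floor_le hh0
  have hlg := Nat.lt_floor_add_one ((2^n : ℝ) * (g x : ℝ))
  have hlh := Nat.lt_floor_add_one ((2^n : ℝ) * (h x : ℝ))
  have hco : ((padd g h hgh) x : ℝ) = (g x : ℝ) + (h x : ℝ) := rfl
  constructor
  · apply Nat.le_floor
    rw [hco]
    push_cast
    unfold flr
    nlinarith [hfg, hfh]
  constructor
  · have : (2^n : ℝ) * ((padd g h hgh) x : ℝ) < ((flr n g x + flr n h x + 1 + 1 : ℕ) : ℝ) := by
      rw [hco]; push_cast; unfold flr; nlinarith [hlg, hlh]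
    have := (Nat.floor_lt (mul_nonneg (le_of_lt (two_pow_pos n)) ((padd g h hgh) x).2.1)).2 this
    unfold flr at this ⊢
    omega
  · have : ((flr n g x + flr n h x : ℕ) : ℝ) ≤ ((2^n : ℕ) : ℝ) := by
      push_cast
      unfold flr
      nlinarith [hfg, hfh, hgh x, two_pow_pos n]
    exact_mod_cast this

lemma S_add_bounds (n : ℕ) :
    S p n g + S p n h ≤ S p n (padd g h hgh) ∧
    S p n (padd g h hgh) ≤ S p n g + S p n h + ((2:ℝ)^n)⁻¹ := by
  have hb := fun x => flr_add_bounds g h hgh n x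
  have hule : ∀ x, flr n g x ≤ 2^n := flr_le n g
  have hvle : ∀ x, flr n h x ≤ 2^n := flr_le n h
  have hwle : ∀ x, flr n (padd g h hgh) x ≤ 2^n := flr_le n (padd g h hgh)
  have hN : (2:ℕ)^n + 2^n ≤ 2^(n+1) := by rw [pow_succ]; omega
  have T1 := Tlem p (flr n g) (flr n h) (2^(n+1))
    (fun x => le_trans (by have := (hb x).2.2; omega) hN)
  have T2 := Tlem p (fun x => flr n g x + flr n h x) (fun _ => 1) (2^(n+1))
    (fun x => by show flr n g x + flr n h x + 1 ≤ 2^(n+1); have := (hb x).2.2; have : (1:ℕ) ≤ 2^n := Nat.one_le_two_pow; omega)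
  beta_reduce at T2
  have hone := sum_one_layer p (2^(n+1)) (Nat.one_le_two_pow)
  rw [hone] at T2
  have Eg := ext_sum p n (flr n g) hule
  have Eh := ext_sum p n (flr n h) hvle
  have Ew := ext_sum p n (flr n (padd g h hgh)) hwle
  have M1 : ∑ k ∈ Icc 1 (2^(n+1)), P p {x | k ≤ flr n g x + flr n h x}
      ≤ ∑ k ∈ Icc 1 (2^(n+1)), P p {x | k ≤ flr n (padd g h hgh) x} :=
    Finset.sum_le_sum (fun k _ => P_mono p (fun x hx => le_trans hx ((hb x).1)))
  have M2 : ∑ k ∈ Icc 1 (2^(n+1)), P p {x | k ≤ flr n (padd g h hgh) x}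
      ≤ ∑ k ∈ Icc 1 (2^(n+1)), P p {x | k ≤ flr n g x + flr n h x + 1} :=
    Finset.sum_le_sum (fun k _ => P_mono p (fun x hx => le_trans hx ((hb x).2.1)))
  unfold S
  rw [← Eg, ← Eh, ← Ew]
  constructor
  · rw [← mul_add, ← T1]
    exact mul_le_mul_of_nonneg_left M1 (by positivity)
  · have hc : ∑ k ∈ Icc 1 (2^(n+1)), P p {x | k ≤ flr n (padd g h hgh) x}
        ≤ ∑ k ∈ Icc 1 (2^(n+1)), P p {x | k ≤ flr n g x}
          + ∑ k ∈ Icc 1 (2^(n+1)), P p {x | k ≤ flr n h x} + 1 := by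
      rw [← T1]; linarith [M2, T2]
    calc ((2:ℝ)^n)⁻¹ * ∑ k ∈ Icc 1 (2^(n+1)), P p {x | k ≤ flr n (padd g h hgh) x}
        ≤ ((2:ℝ)^n)⁻¹ * (∑ k ∈ Icc 1 (2^(n+1)), P p {x | k ≤ flr n g x}
            + ∑ k ∈ Icc 1 (2^(n+1)), P p {x | k ≤ flr n h x} + 1) :=
          mul_le_mul_of_nonneg_left hc (by positivity)
      _ = _ := by ring

lemma F_add : F p (padd g h hgh) = F p g + F p h := by
  have t1 := tendsto_S p (padd g h hgh)
  have t2 : Filter.Tendsto (fun n => S p n g + S p n h) Filter.atTop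
      (nhds (F p g + F p h)) := (tendsto_S p g).add (tendsto_S p h)
  have t3 : Filter.Tendsto (fun n => S p n g + S p n h + ((2:ℝ)^n)⁻¹) Filter.atTop
      (nhds (F p g + F p h)) := by
    have hz : Filter.Tendsto (fun n : ℕ => ((2:ℝ)^n)⁻¹) Filter.atTop (nhds 0) := by
      simp_rw [← inv_pow]
      exact tendsto_pow_atTop_nhds_zero_of_lt_one (by norm_num) (by norm_num)
    simpa using t2.add hz
  have t4 : Filter.Tendsto (fun n => S p n (padd g h hgh)) Filter.atTop
      (nhds (F p g + F p h)) :=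
    tendsto_of_tendsto_of_tendsto_of_le_of_le t2 t3
      (fun n => (S_add_bounds p g h hgh n).1) (fun n => (S_add_bounds p g h hgh n).2)
  exact tendsto_nhds_unique t1 t4

end add

lemma S_mono_g (p : FinAddProb X) (n : ℕ) {g h : X → I} (hgh : ∀ x, (g x : ℝ) ≤ (h x : ℝ)) :
    S p n g ≤ S p n h := by
  unfold S
  apply mul_le_mul_of_nonneg_left _ (by positivity)
  apply Finset.sum_le_sum
  intro k _
  apply P_mono
  intro x hx
  simp only [Set.mem_setOf_eq] at hx ⊢
  refine le_trans hx (Nat.floor_le_floor ?_)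
  have := hgh x
  nlinarith [two_pow_pos n]

lemma F_mono_g (p : FinAddProb X) {g h : X → I} (hgh : ∀ x, (g x : ℝ) ≤ (h x : ℝ)) :
    F p g ≤ F p h :=
  ciSup_mono (S_bddAbove p h) (fun n => S_mono_g p n hgh)


/-! ### scalar multiplication -/

lemma chi_empty : chi (∅ : Set X) = fun _ => (0:I) := by
  funext x; unfold chi; simp

lemma F_zero (p : FinAddProb X) : F p (fun _ => (0:I)) = 0 := by
  rw [← chi_empty, F_chi, P_empty]

lemma smul_coe (r : I) (g : X → I) (x : X) : ((r * g x : I) : ℝ) = (r : ℝ) * (g x : ℝ) :=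
  Set.Icc.coe_mul r (g x)

def qI (m j : ℕ) (hm : m ≤ 2^j) : I :=
  ⟨(m:ℝ)/2^j, ⟨by positivity, by
    rw [div_le_one (two_pow_pos j)]
    exact_mod_cast Nat.cast_le.mpr hm |>.trans_eq (by push_cast; ring)⟩⟩

lemma qI_coe (m j : ℕ) (hm : m ≤ 2^j) : ((qI m j hm : I) : ℝ) = (m:ℝ)/2^j := rfl

lemma tendsto_inv_two_pow : Filter.Tendsto (fun n : ℕ => ((2:ℝ)^n)⁻¹) Filter.atTop (nhds 0) := by
  simp_rw [← inv_pow]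
  exact tendsto_pow_atTop_nhds_zero_of_lt_one (by norm_num) (by norm_num)

lemma eq_of_abs_le_inv_two_pow {a : ℝ} (h : ∀ j : ℕ, |a| ≤ ((2:ℝ)^j)⁻¹) : a = 0 := by
  have h0 : |a| ≤ 0 := ge_of_tendsto' tendsto_inv_two_pow h
  have := abs_nonneg a
  exact abs_eq_zero.mp (le_antisymm h0 this)

lemma scale_pow (p : FinAddProb X) (g : X → I) (j : ℕ) :
    ∀ m (hm : m ≤ 2^j),
      F p (fun x => qI m j hm * g x) = (m:ℝ) * F p (fun x => qI 1 j Nat.one_le_two_pow * g x) := by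
  intro m
  induction m with
  | zero =>
    intro hm
    have : (fun x => qI 0 j hm * g x) = (fun _ => (0:I)) := by
      funext x
      have : qI 0 j hm = 0 := Subtype.ext (by rw [qI_coe]; simp)
      rw [this, zero_mul]
    rw [this, F_zero]; simp
  | succ m ih =>
    intro hm
    have hm' : m ≤ 2^j := by omega
    have hgh : ∀ x, ((qI m j hm' * g x : I) : ℝ) + ((qI 1 j Nat.one_le_two_pow * g x : I) : ℝ) ≤ 1 := by
      intro x
      rw [smul_coe, smul_coe, qI_coe, qI_coe]
      have h1 : ((m:ℝ)/2^j) * (g x : ℝ) + (((1:ℕ):ℝ)/2^j) * (g x : ℝ)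
          = (((m+1 : ℕ):ℝ)/2^j) * (g x : ℝ) := by push_cast; ring
      rw [h1]
      have h2 : (((m+1 : ℕ):ℝ)/2^j) ≤ 1 := by
        rw [div_le_one (two_pow_pos j)]
        calc ((m+1 : ℕ):ℝ) ≤ ((2^j : ℕ):ℝ) := Nat.cast_le.mpr hm
          _ = (2:ℝ)^j := by push_cast; ring
      nlinarith [(g x).2.1, (g x).2.2]
    have hpadd : padd (fun x => qI m j hm' * g x) (fun x => qI 1 j Nat.one_le_two_pow * g x) hgh
        = (fun x => qI (m+1) j hm * g x) := by
      funext x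
      apply Subtype.ext
      show ((qI m j hm' * g x : I) : ℝ) + ((qI 1 j Nat.one_le_two_pow * g x : I) : ℝ) = _
      rw [smul_coe, smul_coe, smul_coe, qI_coe, qI_coe, qI_coe]
      push_cast; ring
    have := F_add p (fun x => qI m j hm' * g x) (fun x => qI 1 j Nat.one_le_two_pow * g x) hgh
    rw [hpadd] at this
    rw [this, ih hm']
    push_cast; ring

lemma scale_exact (p : FinAddProb X) (g : X → I) (j m : ℕ) (hm : m ≤ 2^j) :
    F p (fun x => qI m j hm * g x) = ((m:ℝ)/2^j) * F p g := by
  have h2j := scale_pow p g j (2^j) le_rfl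
  have hid : (fun x => qI (2^j) j le_rfl * g x) = g := by
    funext x
    have : qI (2^j) j le_rfl = 1 := Subtype.ext (by
      rw [qI_coe]
      push_cast
      rw [div_self (ne_of_gt (two_pow_pos j))])
    rw [this, one_mul]
  rw [hid] at h2j
  have hunit : F p (fun x => qI 1 j Nat.one_le_two_pow * g x) = ((2:ℝ)^j)⁻¹ * F p g := by
    have h2 : ((2^j : ℕ):ℝ) = (2:ℝ)^j := by push_cast; ring
    rw [h2] at h2j
    rw [h2j, ← mul_assoc, inv_mul_cancel₀ (ne_of_gt (two_pow_pos j)), one_mul]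
  rw [scale_pow p g j m hm, hunit]
  ring

lemma F_smul (p : FinAddProb X) (r : I) (g : X → I) :
    F p (fun x => r * g x) = (r : ℝ) * F p g := by
  have key : F p (fun x => r * g x) - (r:ℝ) * F p g = 0 := by
    apply eq_of_abs_le_inv_two_pow
    intro j
    set m := ⌊(r:ℝ) * 2^j⌋₊ with hmdef
    have hr0 := r.2.1
    have hr1 := r.2.2
    have hFg0 := F_nonneg p g
    have hFg1 := F_le_one p g
    have hm : m ≤ 2^j := by
      have : (r:ℝ) * 2^j ≤ ((2^j : ℕ):ℝ) := by
        push_cast; nlinarith [two_pow_pos j]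
      calc m ≤ ⌊((2^j : ℕ):ℝ)⌋₊ := Nat.floor_le_floor this
        _ = 2^j := Nat.floor_natCast _
    have hml : ((m:ℝ)/2^j) ≤ (r:ℝ) := by
      rw [div_le_iff₀ (two_pow_pos j)]
      exact Nat.floor_le (by positivity)
    have hmu : (r:ℝ) ≤ ((m:ℝ)+1)/2^j := by
      rw [le_div_iff₀ (two_pow_pos j)]
      have := Nat.lt_floor_add_one ((r:ℝ) * 2^j)
      linarith [this]
    set m' := min (m+1) (2^j) with hm'def
    have hm' : m' ≤ 2^j := min_le_right _ _
    have hm'u : (r:ℝ) ≤ ((m':ℝ))/2^j := by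
      rcases le_or_gt (m+1) (2^j) with hc | hc
      · have : m' = m+1 := min_eq_left hc
        rw [this]; push_cast; linarith [hmu]
      · have : m' = 2^j := min_eq_right (by omega)
        rw [this]
        push_cast
        rw [div_self (ne_of_gt (two_pow_pos j))]
        exact hr1
    -- lower bound
    have low : ((m:ℝ)/2^j) * F p g ≤ F p (fun x => r * g x) := by
      rw [← scale_exact p g j m hm]
      apply F_mono_g
      intro x
      rw [smul_coe, smul_coe, qI_coe]
      exact mul_le_mul_of_nonneg_right hml (g x).2.1
    have upp : F p (fun x => r * g x) ≤ ((m':ℝ)/2^j) * F p g := by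
      rw [← scale_exact p g j m' hm']
      apply F_mono_g
      intro x
      rw [smul_coe, smul_coe, qI_coe]
      exact mul_le_mul_of_nonneg_right hm'u (g x).2.1
    have hm'2 : ((m':ℝ))/2^j ≤ (m:ℝ)/2^j + ((2:ℝ)^j)⁻¹ := by
      have hle : (m':ℕ) ≤ m+1 := min_le_left _ _
      have hc : ((m':ℕ):ℝ) ≤ (m:ℝ)+1 := by exact_mod_cast hle
      have h2 : ((m':ℝ))/2^j ≤ ((m:ℝ)+1)/2^j := by gcongr
      have h3 : ((m:ℝ)+1)/2^j = (m:ℝ)/2^j + ((2:ℝ)^j)⁻¹ := by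
        field_simp
      linarith
    rw [abs_le]
    constructor
    · -- r F g - F(rg) ≤ 2^{-j}... goal: -(2^j)⁻¹ ≤ F(rg) - r Fg
      have h1 : (r:ℝ) * F p g ≤ ((m:ℝ)/2^j) * F p g + ((2:ℝ)^j)⁻¹ := by
        have : (r:ℝ) * F p g - ((m:ℝ)/2^j) * F p g = ((r:ℝ) - (m:ℝ)/2^j) * F p g := by ring
        nlinarith [hml, hmu, two_pow_pos j]
      linarith [low]
    · have h2 : ((m':ℝ)/2^j) * F p g ≤ (r:ℝ) * F p g + ((2:ℝ)^j)⁻¹ := by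
        nlinarith [hm'2, hml, two_pow_pos j]
      linarith [upp]

  linarith [key]

/-! ### the effect-module-morphism side -/

section fside
variable (f : EffectModuleHomPow X)

lemma chi_union {A B : Set X} (hAB : Disjoint A B) (hgh : ∀ x, ((chi A x : I) : ℝ) + ((chi B x : I) : ℝ) ≤ 1) :
    (fun x => (⟨((chi A x : I) : ℝ) + ((chi B x : I) : ℝ),
      ⟨add_nonneg (chi A x).2.1 (chi B x).2.1, hgh x⟩⟩ : I)) = chi (A ∪ B) := by
  funext x
  apply Subtype.ext
  show ((chi A x : I) : ℝ) + ((chi B x : I) : ℝ) = ((chi (A ∪ B) x : I) : ℝ)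
  rw [chi_coe, chi_coe, chi_coe]
  by_cases hA : x ∈ A
  · have hB : x ∉ B := Set.disjoint_left.mp hAB hA
    simp [hA, hB]
  · by_cases hB : x ∈ B <;> simp [hA, hB]

lemma chi_sum_le {A B : Set X} (hAB : Disjoint A B) :
    ∀ x, ((chi A x : I) : ℝ) + ((chi B x : I) : ℝ) ≤ 1 := by
  intro x
  rw [chi_coe, chi_coe]
  by_cases hA : x ∈ A
  · have hB : x ∉ B := Set.disjoint_left.mp hAB hA
    simp [hA, hB]
  · by_cases hB : x ∈ B <;> simp [hA, hB]

def toMeas : FinAddProb X where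
  meas := fun A => f.toFun (chi A)
  meas_univ := by show f.toFun (chi Set.univ) = 1; rw [chi_univ]; exact f.map_one
  meas_union := by
    intro A B hAB
    have := f.map_add (chi A) (chi B) (chi_sum_le hAB)
    rwa [chi_union hAB (chi_sum_le hAB)] at this

lemma P_toMeas (A : Set X) : P (toMeas f) A = (f.toFun (chi A) : ℝ) := rfl

lemma f_zero : (f.toFun (fun _ => (0:I)) : ℝ) = 0 := by
  have h := f.map_smul 0 (fun _ => (0:I))
  have h2 : (fun x : X => (0:I) * (0:I)) = (fun _ : X => (0:I)) := by
    funext x; rw [zero_mul]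
  rw [h2] at h
  rw [h, Set.Icc.coe_mul]
  simp

lemma f_mono {g h : X → I} (hgh : ∀ x, (g x : ℝ) ≤ (h x : ℝ)) :
    (f.toFun g : ℝ) ≤ (f.toFun h : ℝ) := by
  set d : X → I := fun x => ⟨(h x : ℝ) - (g x : ℝ),
    ⟨sub_nonneg.mpr (hgh x), le_trans (by linarith [(g x).2.1]) (h x).2.2⟩⟩ with hd
  have hsum : ∀ x, (g x : ℝ) + (d x : ℝ) ≤ 1 := by
    intro x
    show (g x : ℝ) + ((h x : ℝ) - (g x : ℝ)) ≤ 1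
    linarith [(h x).2.2]
  have hmap := f.map_add g d hsum
  have hfun : (fun x => (⟨(g x : ℝ) + (d x : ℝ),
      ⟨add_nonneg (g x).2.1 (d x).2.1, hsum x⟩⟩ : I)) = h := by
    funext x
    apply Subtype.ext
    show (g x : ℝ) + ((h x : ℝ) - (g x : ℝ)) = (h x : ℝ)
    ring
  rw [hfun] at hmap
  have := (f.toFun d).2.1
  linarith [hmap]

def rn (n : ℕ) : I := ⟨((2:ℝ)^n)⁻¹, ⟨by positivity, by
  rw [inv_le_one_iff₀]
  right
  exact one_le_pow₀ (by norm_num)⟩⟩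

def psin (n m : ℕ) (g : X → I) : X → I := fun x =>
  ⟨((min (flr n g x) m : ℕ):ℝ)/2^n, ⟨by positivity, by
    rw [div_le_one (two_pow_pos n)]
    have h1 : min (flr n g x) m ≤ 2^n := le_trans (min_le_left _ _) (flr_le n g x)
    calc ((min (flr n g x) m : ℕ):ℝ) ≤ ((2^n : ℕ):ℝ) := Nat.cast_le.mpr h1
      _ = (2:ℝ)^n := by push_cast; ring⟩⟩

lemma psin_coe (n m : ℕ) (g : X → I) (x : X) :
    ((psin n m g x : I) : ℝ) = ((min (flr n g x) m : ℕ):ℝ)/2^n := rfl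

lemma psin_succ_coe (n m : ℕ) (g : X → I) (x : X) :
    ((psin n m g x : I) : ℝ) + ((rn n * chi {x | m+1 ≤ flr n g x} x : I) : ℝ)
      = ((min (flr n g x) (m+1) : ℕ):ℝ)/2^n := by
  rw [Set.Icc.coe_mul, chi_coe, psin_coe]
  show _ + ((2:ℝ)^n)⁻¹ * _ = _
  by_cases hx : m+1 ≤ flr n g x
  · have e1 : min (flr n g x) m = m := by omega
    have e2 : min (flr n g x) (m+1) = m+1 := by omega
    simp only [Set.mem_setOf_eq, hx, if_true, e1, e2]
    push_cast; ring
  · have e1 : min (flr n g x) (m+1) = min (flr n g x) m := by omega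
    simp only [Set.mem_setOf_eq, hx, if_false, e1]
    ring

lemma psin_sum_le (n m : ℕ) (g : X → I) :
    ∀ x, ((psin n m g x : I) : ℝ) + ((rn n * chi {x | m+1 ≤ flr n g x} x : I) : ℝ) ≤ 1 := by
  intro x
  rw [psin_succ_coe]
  rw [div_le_one (two_pow_pos n)]
  have h1 : min (flr n g x) (m+1) ≤ 2^n := le_trans (min_le_left _ _) (flr_le n g x)
  calc ((min (flr n g x) (m+1) : ℕ):ℝ) ≤ ((2^n : ℕ):ℝ) := Nat.cast_le.mpr h1
    _ = (2:ℝ)^n := by push_cast; ring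

lemma f_psin (n : ℕ) (g : X → I) : ∀ m,
    (f.toFun (psin n m g) : ℝ)
      = ((2:ℝ)^n)⁻¹ * ∑ k ∈ Icc 1 m, (f.toFun (chi {x | k ≤ flr n g x}) : ℝ) := by
  intro m
  induction m with
  | zero =>
    have h0 : psin n 0 g = (fun _ => (0:I)) := by
      funext x
      apply Subtype.ext
      rw [psin_coe]
      simp
    rw [h0, f_zero]
    simp
  | succ m ih =>
    have hmap := f.map_add (psin n m g) (fun x => rn n * chi {x | m+1 ≤ flr n g x} x)
      (psin_sum_le n m g)
    have hfun : (fun x => (⟨((psin n m g x : I) : ℝ) + ((rn n * chi {x | m+1 ≤ flr n g x} x : I) : ℝ),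
        ⟨add_nonneg (psin n m g x).2.1 (rn n * chi {x | m+1 ≤ flr n g x} x).2.1,
          psin_sum_le n m g x⟩⟩ : I)) = psin n (m+1) g := by
      funext x
      apply Subtype.ext
      show ((psin n m g x : I):ℝ) + ((rn n * chi {x | m+1 ≤ flr n g x} x : I):ℝ)
        = ((psin n (m+1) g x : I):ℝ)
      rw [psin_succ_coe, psin_coe]
    rw [hfun] at hmap
    have hsmul := f.map_smul (rn n) (chi {x | m+1 ≤ flr n g x})
    rw [hmap, ih, hsmul, Set.Icc.coe_mul, Finset.sum_Icc_succ_top (by omega : 1 ≤ m+1)]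
    show _ = ((2:ℝ)^n)⁻¹ * (_ + _)
    have : ((rn n : I) : ℝ) = ((2:ℝ)^n)⁻¹ := rfl
    rw [this]
    ring

lemma f_S (n : ℕ) (g : X → I) : S (toMeas f) n g = (f.toFun (psin n (2^n) g) : ℝ) := by
  rw [f_psin f n g (2^n)]
  rfl

lemma psin_top_coe (n : ℕ) (g : X → I) (x : X) :
    ((psin n (2^n) g x : I) : ℝ) = ((flr n g x : ℕ):ℝ)/2^n := by
  rw [psin_coe]
  congr 2
  exact min_eq_left (flr_le n g x)

lemma f_S_le (n : ℕ) (g : X → I) : S (toMeas f) n g ≤ (f.toFun g : ℝ) := by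
  rw [f_S]
  apply f_mono
  intro x
  rw [psin_top_coe]
  rw [div_le_iff₀ (two_pow_pos n)]
  have := Nat.floor_le (mul_nonneg (le_of_lt (two_pow_pos n)) (g x).2.1)
  unfold flr
  linarith [this]

lemma f_le_S (n : ℕ) (g : X → I) : (f.toFun g : ℝ) ≤ S (toMeas f) n g + ((2:ℝ)^n)⁻¹ := by
  rw [f_S]
  set d : X → I := fun x => ⟨(g x : ℝ) - ((psin n (2^n) g x : I) : ℝ),
    ⟨sub_nonneg.mpr (by
      rw [psin_top_coe, div_le_iff₀ (two_pow_pos n)]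
      have := Nat.floor_le (mul_nonneg (le_of_lt (two_pow_pos n)) (g x).2.1)
      unfold flr; linarith [this]),
    le_trans (by linarith [(psin n (2^n) g x).2.1]) (g x).2.2⟩⟩ with hd
  have hsum : ∀ x, ((psin n (2^n) g x : I) : ℝ) + (d x : ℝ) ≤ 1 := by
    intro x
    show _ + ((g x : ℝ) - _) ≤ 1
    have := (g x).2.2
    linarith [this]
  have hmap := f.map_add (psin n (2^n) g) d hsum
  have hfun : (fun x => (⟨((psin n (2^n) g x : I) : ℝ) + (d x : ℝ),
      ⟨add_nonneg (psin n (2^n) g x).2.1 (d x).2.1, hsum x⟩⟩ : I)) = g := by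
    funext x
    apply Subtype.ext
    show _ + ((g x : ℝ) - _) = (g x : ℝ)
    ring
  rw [hfun] at hmap
  -- bound f d
  have hdle : (f.toFun d : ℝ) ≤ ((2:ℝ)^n)⁻¹ := by
    have h1 : (f.toFun d : ℝ) ≤ (f.toFun (fun x => rn n * (1 : X → I) x) : ℝ) := by
      apply f_mono
      intro x
      show (g x : ℝ) - _ ≤ ((rn n * (1 : X → I) x : I) : ℝ)
      rw [Set.Icc.coe_mul, psin_top_coe]
      have hco : (((1 : X → I) x : I) : ℝ) = 1 := rfl
      rw [hco, mul_one]
      show (g x : ℝ) - _ ≤ ((2:ℝ)^n)⁻¹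
      have hlt := Nat.lt_floor_add_one ((2^n : ℝ) * (g x : ℝ))
      have h2 : (g x : ℝ) ≤ (((flr n g x : ℕ):ℝ)+1)/2^n := by
        rw [le_div_iff₀ (two_pow_pos n)]
        unfold flr
        nlinarith [hlt, two_pow_pos n]
      have h3 : (((flr n g x : ℕ):ℝ)+1)/2^n = ((flr n g x : ℕ):ℝ)/2^n + ((2:ℝ)^n)⁻¹ := by
        ring
      rw [h3] at h2
      linarith [h2]
    have h2 := f.map_smul (rn n) 1
    rw [h2, f.map_one] at h1
    rw [Set.Icc.coe_mul] at h1
    have : ((rn n : I) : ℝ) = ((2:ℝ)^n)⁻¹ := rfl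
    rw [this] at h1
    simpa using h1
  linarith [hmap, hdle]

lemma F_toMeas (g : X → I) : F (toMeas f) g = (f.toFun g : ℝ) := by
  have t1 := tendsto_S (toMeas f) g
  have tlow : Filter.Tendsto (fun n : ℕ => (f.toFun g : ℝ) - ((2:ℝ)^n)⁻¹) Filter.atTop
      (nhds ((f.toFun g : ℝ))) := by
    have := Filter.Tendsto.sub (tendsto_const_nhds :
        Filter.Tendsto (fun _ : ℕ => (f.toFun g : ℝ)) Filter.atTop (nhds ((f.toFun g : ℝ))))
      tendsto_inv_two_pow
    simpa using this
  have tupp : Filter.Tendsto (fun _ : ℕ => (f.toFun g : ℝ)) Filter.atTop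
      (nhds ((f.toFun g : ℝ))) := tendsto_const_nhds
  have t2 : Filter.Tendsto (fun n => S (toMeas f) n g) Filter.atTop
      (nhds ((f.toFun g : ℝ))) :=
    tendsto_of_tendsto_of_tendsto_of_le_of_le tlow tupp
      (fun n => by linarith [f_le_S f n g]) (fun n => f_S_le f n g)
  exact tendsto_nhds_unique t1 t2

end fside

def toHom (p : FinAddProb X) : EffectModuleHomPow X where
  toFun := fun g => ⟨F p g, F_mem p g⟩
  map_one := Subtype.ext (F_one p)
  map_add := fun g h hgh => by
    show F p _ = F p g + F p h
    exact F_add p g h hgh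
  map_smul := fun r g => by
    apply Subtype.ext
    rw [Set.Icc.coe_mul]
    exact F_smul p r g

lemma hom_ext {f f' : EffectModuleHomPow X} (h : f.toFun = f'.toFun) : f = f' := by
  cases f; cases f'; simpa using h

lemma prob_ext {p q : FinAddProb X} (h : p.meas = q.meas) : p = q := by
  cases p; cases q; simpa using h

def equ : EffectModuleHomPow X ≃ FinAddProb X where
  toFun := toMeas
  invFun := toHom
  left_inv := fun f => by
    apply hom_ext
    funext g
    exact Subtype.ext (F_toMeas f g)
  right_inv := fun p => by
    apply prob_ext
    funext A
    apply Subtype.ext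
    show F p (chi A) = (p.meas A : ℝ)
    rw [F_chi]
    rfl

lemma equ_spec (f : EffectModuleHomPow X) (A : Set X) :
    (equ f).meas A = f.toFun (fun x => if x ∈ A then 1 else 0) := rfl

end EMFAProof


/-- Finitely additive probability measures on `X` correspond bijectively (and naturally) to
effect module morphisms `[0,1]^X → [0,1]`: the assignment sending `f` to the measure
`p` with `p(A) = f(χ_A)` is a bijection `EMod([0,1]^X, [0,1]) ≅ EA(2^X, [0,1])`. -/
theorem effectModuleHom_equiv_finAddProb (X : Type u) :
    ∃ e : EffectModuleHomPow X ≃ FinAddProb X,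
      ∀ (f : EffectModuleHomPow X) (A : Set X),
        (e f).meas A = f.toFun (fun x => if x ∈ A then 1 else 0) :=
  ⟨EMFAProof.equ, EMFAProof.equ_spec⟩
end
end
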